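/- arXiv:math/0302111 — 6 statements merged into one kernel-verified Lean document; each statement's English description precedes it below -/
import Mathlib

section
/- Let G be a Hausdorff topological group and Γ a discrete cocompact subgroup of G. If γ ∈ Γ is such that the identity element 1 of G lies in the topological closure of the conjugacy class {g·γ·g⁻¹ : g ∈ G}, then γ = 1. -/
/-- If `Γ` is a discrete cocompact subgroup of a Hausdorff topological group `G`
and `γ ∈ Γ` is such that the identity lies in the closure of the `G`-conjugacy
class of `γ`, then `γ = 1`. -/
theorem stmt_0 {G : Type*} [Group G] [TopologicalSpace G] [IsTopologicalGroup G] [T2Space G]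
    (Γ : Subgroup G) (hdisc : DiscreteTopology Γ)
    (hcocompact : ∃ K : Set G, IsCompact K ∧ ∀ g : G, ∃ k ∈ K, ∃ γ ∈ Γ, g = k * γ)
    (γ : G) (hγ : γ ∈ Γ)
    (hcl : (1 : G) ∈ closure {x : G | ∃ g : G, x = g * γ * g⁻¹}) :
    γ = 1 := by
  obtain ⟨K, hK, hKcov⟩ := hcocompact
  -- discreteness: an open U with U ∩ Γ = {1}
  have hopen : IsOpen ({1} : Set Γ) := isOpen_discrete _
  obtain ⟨U, hUopen, hU⟩ := isOpen_induced_iff.mp hopen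
  have hU1 : (1 : G) ∈ U := by
    have : ((1 : Γ) : G) ∈ U := by
      have : (1 : Γ) ∈ (Subtype.val ⁻¹' U : Set Γ) := by rw [hU]; rfl
      exact this
    simpa using this
  -- continuous map (k, x) ↦ k⁻¹ * x * k
  have hF : Continuous (fun p : G × G => p.1⁻¹ * p.2 * p.1) := by continuity
  have hN : IsOpen ((fun p : G × G => p.1⁻¹ * p.2 * p.1) ⁻¹' U) := hUopen.preimage hF
  have hsub : K ×ˢ ({1} : Set G) ⊆ (fun p : G × G => p.1⁻¹ * p.2 * p.1) ⁻¹' U := by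
    rintro ⟨k, x⟩ ⟨hk, hx⟩
    simp only [Set.mem_singleton_iff] at hx
    subst hx
    simpa using hU1
  obtain ⟨u, v, hu, hv, hKu, h1v, huv⟩ :=
    generalized_tube_lemma hK isCompact_singleton hN hsub
  have h1v' : (1 : G) ∈ v := h1v rfl
  -- find a conjugate of γ in v
  obtain ⟨x, hxv, g, hxg⟩ := mem_closure_iff.mp hcl v hv h1v'
  obtain ⟨k, hk, δ, hδ, hgk⟩ := hKcov g
  have hmem : k⁻¹ * x * k ∈ U := huv (Set.mk_mem_prod (hKu hk) hxv)
  have hx_eq : k⁻¹ * x * k = δ * γ * δ⁻¹ := by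
    subst hxg hgk
    group
  have hΓmem : δ * γ * δ⁻¹ ∈ Γ := mul_mem (mul_mem hδ hγ) (inv_mem hδ)
  have : (⟨δ * γ * δ⁻¹, hΓmem⟩ : Γ) ∈ (Subtype.val ⁻¹' U : Set Γ) := by
    simpa [hx_eq] using hmem
  rw [hU] at this
  have h1 : δ * γ * δ⁻¹ = 1 := congrArg Subtype.val this
  have := mul_left_cancel (a := δ) (b := γ * δ⁻¹) (c := δ⁻¹) (by
    rw [← mul_assoc]; simpa using h1)
  exact mul_right_cancel (b := δ⁻¹) (by simpa [mul_assoc] using this)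
end

section
/- Let p be a prime and let g be an element of SL(2, ℚ_p), the special linear group of 2×2 matrices of determinant 1 over the p-adic numbers, with its topology induced from the matrix topology. Then the identity matrix lies in the closure of the conjugacy class {h·g·h⁻¹ : h ∈ SL(2, ℚ_p)} if and only if g is unipotent, i.e. (g − 1)² = 0 as a 2×2 matrix over ℚ_p. -/
/-!
Both conditions are read off the trace. By Cayley–Hamilton, `(g - 1)² = (tr g - 2) • g` on `SL₂`,
so `g` is unipotent iff `tr g = 2`. The trace is a continuous class function, so it is constant
on the closure of a conjugacy class; if that closure contains `1`, then `tr g = tr 1 = 2`.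
Conversely, an element of trace `2` is conjugate to an upper transvection `[[1, b], [0, 1]]`.
Conjugating that by `diag(tⁿ, t⁻ⁿ)` with `0 < ‖t‖ < 1` gives `[[1, t²ⁿ b], [0, 1]]`, which
tends to `1`.
-/

open Matrix Filter Topology
open scoped MatrixGroups

instance specialLinearGroupTopology {n : Type*} [DecidableEq n] [Fintype n]
    {R : Type*} [CommRing R] [TopologicalSpace R] :
    TopologicalSpace (SpecialLinearGroup n R) :=
  TopologicalSpace.induced (fun g => (g : Matrix n n R)) inferInstance

namespace Matrix.SpecialLinearGroup

section CommRing

variable {n R : Type*} [Fintype n] [DecidableEq n] [CommRing R]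

lemma trace_mul_mul_inv (h g : SpecialLinearGroup n R) :
    trace ((h * g * h⁻¹ : SpecialLinearGroup n R) : Matrix n n R) = trace (g : Matrix n n R) := by
  rw [coe_mul, coe_mul, trace_mul_cycle, ← coe_mul, inv_mul_cancel, coe_one, one_mul]

lemma continuous_transvection [TopologicalSpace R] [ContinuousAdd R] {i j : n} (hij : i ≠ j) :
    Continuous (transvection hij : R → SpecialLinearGroup n R) := by
  refine continuous_induced_rng.2 (continuous_matrix fun k l => ?_)
  simp only [Function.comp_apply, transvection_coe, add_apply, single_apply]
  split_ifs <;> fun_prop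

lemma trace_eq_card_of_one_mem_closure_conj [TopologicalSpace R] [ContinuousAdd R] [T1Space R]
    {g : SpecialLinearGroup n R} (h : 1 ∈ closure {x | IsConj g x}) :
    trace (g : Matrix n n R) = Fintype.card n := by
  have hclosed : IsClosed
      {x : SpecialLinearGroup n R | trace (x : Matrix n n R) = trace (g : Matrix n n R)} :=
    isClosed_singleton.preimage continuous_induced_dom.matrix_trace
  have hone := closure_minimal (fun x hx => ?_) hclosed h
  · simpa [eq_comm] using hone
  · obtain ⟨c, rfl⟩ := isConj_iff.1 hx
    exact trace_mul_mul_inv c g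

lemma sq_sub_one_eq_trace_sub_two_smul [Nontrivial R] (g : SL(2, R)) :
    ((g : Matrix (Fin 2) (Fin 2) R) - 1) ^ 2 =
      (trace (g : Matrix (Fin 2) (Fin 2) R) - 2) • (g : Matrix (Fin 2) (Fin 2) R) := by
  have hCH := aeval_self_charpoly (g : Matrix (Fin 2) (Fin 2) R)
  simp only [charpoly_fin_two, map_sub, map_add, map_mul, map_pow, Polynomial.aeval_X,
    Polynomial.aeval_C, Algebra.algebraMap_eq_smul_one, smul_mul_assoc, one_mul, det_coe,
    map_one] at hCH
  rw [← sub_eq_zero, ← hCH, sub_smul, sq, sq, ofNat_smul_eq_nsmul]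
  noncomm_ring

end CommRing

section Field

variable {K : Type*} [Field K]

lemma sq_sub_one_eq_zero_iff_trace_eq_two (g : SL(2, K)) :
    ((g : Matrix (Fin 2) (Fin 2) K) - 1) ^ 2 = 0 ↔ trace (g : Matrix (Fin 2) (Fin 2) K) = 2 := by
  rw [sq_sub_one_eq_trace_sub_two_smul, smul_eq_zero, sub_eq_zero,
    or_iff_left fun h => g.det_ne_zero (by rw [h, det_zero])]

lemma diag2_mul_transvection_mul_inv (a : K) (ha : a ≠ 0) (b : K) :
    diag2 a ha * transvection zero_ne_one b * (diag2 a ha)⁻¹ =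
      transvection zero_ne_one (a ^ 2 * b) := by
  rw [diag2_inv]
  refine Subtype.ext <| Matrix.ext fun i j ↦ ?_
  fin_cases i <;> fin_cases j <;> simp [transvection_coe, diag2_coe, ha, sq]
  ring

lemma isConj_transvection_of_trace_eq_two (g : SL(2, K))
    (htr : trace (g : Matrix (Fin 2) (Fin 2) K) = 2) :
    ∃ b, IsConj (transvection zero_ne_one b) g := by
  have hdet := det_fin_two (g : Matrix (Fin 2) (Fin 2) K)
  rw [det_coe] at hdet
  rw [trace_fin_two] at htr
  by_cases hc : g 1 0 = 0
  · have ha : g 0 0 = 1 := by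
      have : (g 0 0 - 1) ^ 2 = 0 := by linear_combination hdet + g 0 0 * htr - g 0 1 * hc
      exact sub_eq_zero.1 (pow_eq_zero_iff two_ne_zero |>.1 this)
    have hd : g 1 1 = 1 := by linear_combination htr - ha
    refine ⟨g 0 1, isConj_iff.2 ⟨1, ?_⟩⟩
    ext i j
    fin_cases i <;> fin_cases j <;> simp [transvection_coe, ha, hd, hc]
  · -- the first column of `M` is the fixed vector `(1 - g₀₀, -g₁₀) / g₁₀` of `g`
    let M : SL(2, K) := ⟨!![(1 - g 0 0) / g 1 0, 1; -1, 0], by simp [det_fin_two_of]⟩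
    refine ⟨-g 1 0, isConj_iff.2 ⟨M, mul_inv_eq_iff_eq_mul.2 (Subtype.ext ?_)⟩⟩
    rw [coe_mul, coe_mul]
    ext i j
    fin_cases i <;> fin_cases j <;>
      simp [M, transvection_coe, mul_apply, Fin.sum_univ_two, single_apply] <;> field_simp
    · linear_combination hdet + g 0 0 * htr
    · ring
    · linear_combination htr

end Field

section NontriviallyNormedField

variable {K : Type*} [NontriviallyNormedField K]

lemma one_mem_closure_conj_transvection (b : K) :
    1 ∈ closure {x : SL(2, K) | IsConj (transvection zero_ne_one b) x} := by
  obtain ⟨t, ht0, ht1⟩ := NormedField.exists_norm_lt_one K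
  have htn (n : ℕ) : t ^ n ≠ 0 := pow_ne_zero n (norm_pos_iff.1 ht0)
  have hconj (n : ℕ) : IsConj (transvection zero_ne_one b : SL(2, K))
      (transvection zero_ne_one ((t ^ n) ^ 2 * b)) :=
    isConj_iff.2 ⟨diag2 (t ^ n) (htn n), diag2_mul_transvection_mul_inv _ _ b⟩
  have hlim : Tendsto (fun n : ℕ => (t ^ n) ^ 2 * b) atTop (𝓝 0) := by
    simpa using ((tendsto_pow_atTop_nhds_zero_of_norm_lt_one ht1).pow 2).mul_const b
  have htend := ((continuous_transvection (n := Fin 2) zero_ne_one).tendsto 0).comp hlim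
  rw [transvection_coeff_zero] at htend
  exact mem_closure_of_tendsto htend (Eventually.of_forall hconj)

theorem one_mem_closure_conj_iff (g : SL(2, K)) :
    1 ∈ closure {x | IsConj g x} ↔ ((g : Matrix (Fin 2) (Fin 2) K) - 1) ^ 2 = 0 := by
  rw [sq_sub_one_eq_zero_iff_trace_eq_two]
  refine ⟨fun h => by simpa using trace_eq_card_of_one_mem_closure_conj h, fun htr => ?_⟩
  obtain ⟨b, hb⟩ := isConj_transvection_of_trace_eq_two g htr
  have hclass : {x | IsConj g x} = {x : SL(2, K) | IsConj (transvection zero_ne_one b) x} :=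
    Set.ext fun x => ⟨hb.trans, hb.symm.trans⟩
  exact hclass ▸ one_mem_closure_conj_transvection b

end NontriviallyNormedField

end Matrix.SpecialLinearGroup

/-- For `g ∈ SL(2, ℚ_p)`, the identity lies in the closure of the conjugacy class
`{h·g·h⁻¹ : h ∈ SL(2, ℚ_p)}` if and only if `g` is unipotent, i.e. `(g - 1)² = 0`. -/
theorem stmt_1 (p : ℕ) [Fact p.Prime] (g : SpecialLinearGroup (Fin 2) ℚ_[p]) :
    (1 : SpecialLinearGroup (Fin 2) ℚ_[p]) ∈
        closure {x : SpecialLinearGroup (Fin 2) ℚ_[p] |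
          ∃ h : SpecialLinearGroup (Fin 2) ℚ_[p], x = h * g * h⁻¹} ↔
      ((g : Matrix (Fin 2) (Fin 2) ℚ_[p]) - 1) ^ 2 = 0 := by
  simpa only [isConj_iff, eq_comm] using SpecialLinearGroup.one_mem_closure_conj_iff g
end

section
/- Let p be a prime and let Γ be a discrete cocompact subgroup of SL(2, ℚ_p). Then Γ contains no nontrivial unipotent element: if γ ∈ Γ satisfies (γ − 1)² = 0 as a 2×2 matrix over ℚ_p, then γ = 1. -/
/-!
Conjugating the unipotent `!![1, e; 0, 1]` by `diag(a, a⁻¹)` gives `!![1, a² e; 0, 1]`, so letting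
`a → 0` shows that `1` lies in the closure of the conjugacy class of every unipotent element of
`SL(2, ℚ_p)`. For a cocompact `Γ`, write each conjugator as `k δ` with `k` in a fixed compact set
and `δ ∈ Γ`: conjugation by elements of a compact set is equicontinuous at `1`, so the
`Γ`-conjugates of `γ` also approach `1`. As `Γ` is discrete, some `δ γ δ⁻¹` equals `1`, whence `γ = 1`.
-/

open Matrix Filter Topology

section CocompactSubgroup

variable {G : Type*} [Group G] [TopologicalSpace G] [IsTopologicalGroup G]

theorem IsCompact.eventually_forall_conj_mem {K U : Set G} (hK : IsCompact K) (hU : U ∈ 𝓝 1) :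
    ∀ᶠ x in 𝓝 (1 : G), ∀ k ∈ K, k⁻¹ * x * k ∈ U := by
  refine hK.eventually_forall_of_forall_eventually fun k _ ↦ ?_
  have hconj : Continuous fun z : G × G ↦ z.2⁻¹ * z.1 * z.2 := by fun_prop
  exact hconj.continuousAt.preimage_mem_nhds (by simpa using hU)

theorem eq_one_of_one_mem_closure_conjugatesOf {Γ : Subgroup G} [DiscreteTopology Γ]
    {K : Set G} (hK : IsCompact K) (hKΓ : ∀ g : G, ∃ k ∈ K, ∃ δ ∈ Γ, g = k * δ) {γ : G}
    (hγ : γ ∈ Γ) (h : (1 : G) ∈ closure (conjugatesOf γ)) : γ = 1 := by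
  obtain ⟨U, hU, hUΓ⟩ : ∃ U ∈ 𝓝 (1 : G), Subtype.val ⁻¹' U ⊆ ({1} : Set Γ) := by
    have : ({1} : Set Γ) ∈ 𝓝 (1 : Γ) := (isOpen_discrete _).mem_nhds rfl
    rw [nhds_subtype] at this
    exact mem_comap.mp this
  obtain ⟨x, hxU, hx⟩ := mem_closure_iff_nhds.mp h _ (hK.eventually_forall_conj_mem hU)
  obtain ⟨g, rfl⟩ := isConj_iff.mp hx
  obtain ⟨k, hk, δ, hδ, rfl⟩ := hKΓ g
  have hconj : δ * γ * δ⁻¹ = k⁻¹ * (k * δ * γ * (k * δ)⁻¹) * k := by group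
  have hmem : δ * γ * δ⁻¹ ∈ Γ := Γ.mul_mem (Γ.mul_mem hδ hγ) (Γ.inv_mem hδ)
  have hone : δ * γ * δ⁻¹ = 1 := by
    have := hUΓ (a := ⟨_, hmem⟩) (show δ * γ * δ⁻¹ ∈ U from hconj ▸ hxU k hk)
    simpa [Subtype.ext_iff] using this
  simpa using hone

end CocompactSubgroup

namespace Matrix.SpecialLinearGroup

-- Mathlib's `topologicalGroup` is stated for the subtype topology, which instance search does not
-- identify with `specialLinearGroupTopology`.
instance isTopologicalGroup {n : Type*} [DecidableEq n] [Fintype n] {R : Type*} [CommRing R]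
    [TopologicalSpace R] [IsTopologicalRing R] : IsTopologicalGroup (SpecialLinearGroup n R) :=
  topologicalGroup

variable {R : Type*} [CommRing R]

def upperUnipotent (e : R) : SpecialLinearGroup (Fin 2) R :=
  ⟨!![1, e; 0, 1], by simp⟩

def diagUnit (a : Rˣ) : SpecialLinearGroup (Fin 2) R :=
  ⟨!![(a : R), 0; 0, ↑a⁻¹], by simp⟩

@[simp]
theorem coe_upperUnipotent (e : R) :
    (upperUnipotent e : Matrix (Fin 2) (Fin 2) R) = !![1, e; 0, 1] := rfl

@[simp]
theorem coe_diagUnit (a : Rˣ) :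
    (diagUnit a : Matrix (Fin 2) (Fin 2) R) = !![(a : R), 0; 0, ↑a⁻¹] := rfl

@[simp]
theorem upperUnipotent_zero : upperUnipotent (0 : R) = 1 := by
  ext i j; fin_cases i <;> fin_cases j <;> simp

theorem diagUnit_mul_upperUnipotent_mul_inv (a : Rˣ) (e : R) :
    diagUnit a * upperUnipotent e * (diagUnit a)⁻¹ = upperUnipotent (a ^ 2 * e) := by
  rw [mul_inv_eq_iff_eq_mul]
  ext i j; fin_cases i <;> fin_cases j <;> simp [sq, mul_right_comm _ e]

theorem continuous_upperUnipotent [TopologicalSpace R] [IsTopologicalRing R] :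
    Continuous (upperUnipotent : R → SpecialLinearGroup (Fin 2) R) := by
  refine continuous_induced_rng.mpr (continuous_matrix fun i j ↦ ?_)
  fin_cases i <;> fin_cases j <;>
    simp only [Function.comp_apply, coe_upperUnipotent, of_apply, cons_val', cons_val_zero,
      cons_val_one, cons_val_fin_one, Fin.zero_eta, Fin.mk_one] <;> fun_prop

theorem exists_isConj_upperUnipotent {F : Type*} [Field F] {A : SpecialLinearGroup (Fin 2) F}
    (hA : ((A : Matrix (Fin 2) (Fin 2) F) - 1) ^ 2 = 0) : ∃ e, IsConj A (upperUnipotent e) := by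
  obtain ⟨a, b, c, d, hA'⟩ : ∃ a b c d, (A : Matrix (Fin 2) (Fin 2) F) = !![a, b; c, d] :=
    ⟨_, _, _, _, eta_fin_two _⟩
  have hdet : a * d - b * c = 1 := by simpa [hA', det_fin_two] using A.det_coe
  have hN : (A : Matrix (Fin 2) (Fin 2) F) - 1 = !![a - 1, b; c, d - 1] := by
    rw [hA', one_fin_two]; ext i j; fin_cases i <;> fin_cases j <;> simp
  rw [hN, sq, mul_fin_two, ← Matrix.ext_iff] at hA
  simp only [Fin.forall_fin_two, of_apply, cons_val', cons_val_zero, cons_val_one,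
    empty_val', cons_val_fin_one, zero_apply] at hA
  obtain ⟨⟨h00, -⟩, h10, h11⟩ := hA
  by_cases hc : c = 0
  · have ha : a = 1 := sub_eq_zero.mp (mul_self_eq_zero.mp (by simpa [hc] using h00))
    have hd : d = 1 := sub_eq_zero.mp (mul_self_eq_zero.mp (by simpa [hc] using h11))
    have : A = upperUnipotent b := by
      ext i j; fin_cases i <;> fin_cases j <;> simp [hA', ha, hc, hd]
    exact ⟨b, this ▸ IsConj.refl A⟩
  · have htr : a + d = 2 := mul_left_cancel₀ hc (by linear_combination h10)
    -- `H` sends the fixed line `⟨(a - 1, c)⟩` of `A` to the first coordinate axis.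
    let H : SpecialLinearGroup (Fin 2) F := ⟨!![0, c⁻¹; -c, a - 1], by simp [hc]⟩
    have hmat : (H : Matrix (Fin 2) (Fin 2) F) * (A : Matrix (Fin 2) (Fin 2) F) =
        (upperUnipotent (-c⁻¹) : Matrix (Fin 2) (Fin 2) F) * H := by
      simp only [H, hA', coe_upperUnipotent, mul_fin_two]
      ext i j; fin_cases i <;> fin_cases j <;>
        simp only [of_apply, cons_val', cons_val_zero, cons_val_one, cons_val_fin_one, Fin.zero_eta,
          Fin.mk_one]
      · ring
      · linear_combination c⁻¹ * htr
      · ring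
      · linear_combination hdet - htr
    refine ⟨-c⁻¹, isConj_iff.mpr ⟨H, mul_inv_eq_iff_eq_mul.mpr (Subtype.ext ?_)⟩⟩
    simpa only [coe_mul] using hmat

theorem one_mem_closure_conjugatesOf_upperUnipotent {𝕜 : Type*} [NontriviallyNormedField 𝕜]
    (e : 𝕜) : (1 : SpecialLinearGroup (Fin 2) 𝕜) ∈ closure (conjugatesOf (upperUnipotent e)) := by
  obtain ⟨a, ha0, ha1⟩ := NormedField.exists_norm_lt_one 𝕜
  have ha : a ≠ 0 := norm_pos_iff.mp ha0
  have hlim : Tendsto (fun n : ℕ ↦ (a ^ n) ^ 2 * e) atTop (𝓝 0) := by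
    simpa using ((tendsto_pow_atTop_nhds_zero_of_norm_lt_one ha1).pow 2).mul_const e
  rw [← upperUnipotent_zero]
  refine mem_closure_of_tendsto (continuous_upperUnipotent.tendsto 0 |>.comp hlim)
    (Eventually.of_forall fun n ↦ isConj_iff.mpr ⟨diagUnit (Units.mk0 _ (pow_ne_zero n ha)), ?_⟩)
  simp [diagUnit_mul_upperUnipotent_mul_inv]

theorem one_mem_closure_conjugatesOf_of_sq_sub_one_eq_zero {𝕜 : Type*}
    [NontriviallyNormedField 𝕜] {A : SpecialLinearGroup (Fin 2) 𝕜}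
    (hA : ((A : Matrix (Fin 2) (Fin 2) 𝕜) - 1) ^ 2 = 0) :
    (1 : SpecialLinearGroup (Fin 2) 𝕜) ∈ closure (conjugatesOf A) := by
  obtain ⟨e, he⟩ := exists_isConj_upperUnipotent hA
  rw [he.conjugatesOf_eq]
  exact one_mem_closure_conjugatesOf_upperUnipotent e

end Matrix.SpecialLinearGroup

/-- A discrete cocompact subgroup of `SL(2, ℚ_p)` contains no nontrivial
unipotent element. -/
theorem stmt_2 (p : ℕ) [Fact p.Prime]
    (Γ : Subgroup (SpecialLinearGroup (Fin 2) ℚ_[p]))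
    (hdisc : DiscreteTopology Γ)
    (hcocompact : ∃ K : Set (SpecialLinearGroup (Fin 2) ℚ_[p]), IsCompact K ∧
      ∀ g : SpecialLinearGroup (Fin 2) ℚ_[p], ∃ k ∈ K, ∃ γ ∈ Γ, g = k * γ)
    (γ : SpecialLinearGroup (Fin 2) ℚ_[p]) (hγ : γ ∈ Γ)
    (hunip : ((γ : Matrix (Fin 2) (Fin 2) ℚ_[p]) - 1) ^ 2 = 0) :
    γ = 1 := by
  obtain ⟨K, hK, hKΓ⟩ := hcocompact
  exact eq_one_of_one_mem_closure_conjugatesOf hK hKΓ hγ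
    (SpecialLinearGroup.one_mem_closure_conjugatesOf_of_sq_sub_one_eq_zero hunip)
end

section
/- Let X be a tree with vertex set V, let L : ℤ → V be a geodesic line, and let h be an automorphism of X with h(L(n)) = L(n + ℓ) for all n ∈ ℤ, where ℓ ≥ 1. Suppose the automorphism u of X fixes pointwise the horoellipse E = {v ∈ V : ∃ t ∈ ℕ, 3·dist(v, L(−t)) ≤ t}. Then for every i ∈ ℕ, the automorphism hⁱ ∘ u ∘ h⁻ⁱ fixes pointwise the ball {v ∈ V : 3·dist(v, L(0)) ≤ i·ℓ}; in particular, for every vertex v there is I ∈ ℕ such that (hⁱ ∘ u ∘ h⁻ⁱ)(v) = v for all i ≥ I. -/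
private lemma iso_dist_eq {V : Type*} {G : SimpleGraph V} (hconn : G.Connected)
    (f : G ≃g G) (a b : V) : G.dist (f a) (f b) = G.dist a b := by
  apply le_antisymm
  · obtain ⟨p, hp⟩ := (hconn a b).exists_walk_length_eq_dist
    calc G.dist (f a) (f b) ≤ (p.map f.toHom).length := SimpleGraph.dist_le _
    _ = G.dist a b := by rw [SimpleGraph.Walk.length_map, hp]
  · obtain ⟨p, hp⟩ := (hconn (f a) (f b)).exists_walk_length_eq_dist
    calc G.dist a b = G.dist (f.symm (f a)) (f.symm (f b)) := by simp
    _ ≤ (p.map f.symm.toHom).length := SimpleGraph.dist_le _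
    _ = G.dist (f a) (f b) := by rw [SimpleGraph.Walk.length_map, hp]

/-- If `u` fixes pointwise the horoellipse of eccentricity `1/3` centered at the end
`L(-∞)` of the axis of a hyperbolic automorphism `h` of translation length `ℓ ≥ 1`,
then `hⁱ ∘ u ∘ h⁻ⁱ` fixes the ball of radius `i·ℓ/3` around `L 0` pointwise; in
particular the conjugates `hⁱ ∘ u ∘ h⁻ⁱ` converge pointwise to the identity. -/
theorem stmt_3 {V : Type*} (G : SimpleGraph V) (hconn : G.Connected) (hacyc : G.IsAcyclic)
    (L : ℤ → V) (hL : ∀ i j : ℤ, G.dist (L i) (L j) = (i - j).natAbs)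
    (h u : G ≃g G) (ℓ : ℤ) (hℓ : 1 ≤ ℓ)
    (hh : ∀ n : ℤ, h (L n) = L (n + ℓ))
    (hu : ∀ v : V, (∃ t : ℕ, 3 * G.dist v (L (-(t : ℤ))) ≤ t) → u v = v) :
    (∀ (i : ℕ) (v : V), (3 * G.dist v (L 0) : ℤ) ≤ (i : ℤ) * ℓ →
        (⇑h)^[i] (u ((⇑h.symm)^[i] v)) = v) ∧
    (∀ v : V, ∃ I : ℕ, ∀ i ≥ I, (⇑h)^[i] (u ((⇑h.symm)^[i] v)) = v) := by
  have hsymm : ∀ n : ℤ, h.symm (L n) = L (n - ℓ) := by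
    intro n
    have := hh (n - ℓ)
    rw [sub_add_cancel] at this
    rw [← this, RelIso.symm_apply_apply]
  -- distance from h.symm^[i] v to L (n - i*ℓ) equals distance from v to L n
  have key : ∀ (i : ℕ) (v : V) (n : ℤ),
      G.dist ((⇑h.symm)^[i] v) (L (n - i * ℓ)) = G.dist v (L n) := by
    intro i
    induction i with
    | zero => intro v n; simp
    | succ i ih =>
      intro v n
      have : (n - (i + 1 : ℕ) * ℓ) = (n - ℓ) - i * ℓ := by push_cast; ring
      rw [Function.iterate_succ_apply, this, ih (h.symm v) (n - ℓ), ← hsymm n,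
        iso_dist_eq hconn]
  have linv : ∀ (i : ℕ) (x : V), (⇑h)^[i] ((⇑h.symm)^[i] x) = x := by
    intro i
    exact Function.LeftInverse.iterate (fun x => h.apply_symm_apply x) i
  have main : ∀ (i : ℕ) (v : V), (3 * G.dist v (L 0) : ℤ) ≤ (i : ℤ) * ℓ →
      (⇑h)^[i] (u ((⇑h.symm)^[i] v)) = v := by
    intro i v hv
    have hpos : (0 : ℤ) ≤ (i : ℤ) * ℓ := mul_nonneg (Int.natCast_nonneg i) (by omega)
    set t : ℕ := ((i : ℤ) * ℓ).toNat with ht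
    have htz : (t : ℤ) = (i : ℤ) * ℓ := Int.toNat_of_nonneg hpos
    have hfix : u ((⇑h.symm)^[i] v) = (⇑h.symm)^[i] v := by
      apply hu
      refine ⟨t, ?_⟩
      have hd : G.dist ((⇑h.symm)^[i] v) (L (-(t : ℤ))) = G.dist v (L 0) := by
        have : (-(t : ℤ)) = 0 - i * ℓ := by omega
        rw [this, key]
      rw [hd]
      omega
    rw [hfix, linv]
  refine ⟨main, fun v => ⟨3 * G.dist v (L 0), fun i hi => main i v ?_⟩⟩
  have : (3 * G.dist v (L 0) : ℤ) ≤ (i : ℤ) := by exact_mod_cast hi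
  nlinarith [Int.natCast_nonneg i]
end

section
/- Let X be a locally finite tree with vertex set V, let c : ℕ → V be a geodesic ray, and let H be a group of automorphisms of X such that (a) every h ∈ H fixes pointwise a tail of c (for each h there is N with h(c(n)) = c(n) for all n ≥ N), and (b) for every k ∈ ℕ, H acts transitively on the horosphere S_k = {v ∈ V : ∃ N, ∀ n ≥ N, dist(v, c(n)) = n − k}. Then for every k ∈ ℕ the stabilizer H_{c(k)} is contained in H_{c(k+1)}, and the index [H_{c(k+1)} : H_{c(k)}] equals deg(c(k+1)) − 1, where deg(c(k+1)) is the number of neighbours of the vertex c(k+1). -/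
/-- The stabilizer of a vertex `v` in a group `H` of automorphisms of a graph `G`. -/
def vertexStabilizer {V : Type*} {G : SimpleGraph V} (H : Subgroup (G ≃g G)) (v : V) :
    Subgroup (G ≃g G) where
  carrier := {h : G ≃g G | h ∈ H ∧ h v = v}
  one_mem' := ⟨H.one_mem, rfl⟩
  mul_mem' := fun {a b} ha hb => ⟨H.mul_mem ha.1 hb.1, by
    rw [RelIso.mul_apply, hb.2, ha.2]⟩
  inv_mem' := fun {a} ha => ⟨H.inv_mem ha.1, by
    conv_lhs => rw [← ha.2]
    exact a.symm_apply_apply v⟩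

section Aux

variable {V : Type*} {G : SimpleGraph V}

lemma aux_iso_dist (hconn : G.Connected) (f : G ≃g G) (u v : V) :
    G.dist (f u) (f v) = G.dist u v := by
  have key : ∀ (g : G ≃g G) (a b : V), G.dist (g a) (g b) ≤ G.dist a b := by
    intro g a b
    obtain ⟨p, hp⟩ := hconn.exists_walk_length_eq_dist a b
    calc G.dist (g a) (g b) ≤ (p.map g.toHom).length := SimpleGraph.dist_le _
      _ = G.dist a b := by rw [SimpleGraph.Walk.length_map, hp]
  refine le_antisymm (key f u v) ?_
  have := key f.symm (f u) (f v)
  simpa using this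

/-- In a tree, a point at given distances from `u` and `w` summing to `dist u w` is unique. -/
lemma aux_mid_unique (hconn : G.Connected) (hacyc : G.IsAcyclic) {u w m m' : V} {a : ℕ}
    (h1 : G.dist u m = a) (h2 : G.dist u m' = a)
    (h3 : G.dist u m + G.dist m w = G.dist u w)
    (h4 : G.dist u m' + G.dist m' w = G.dist u w) : m = m' := by
  obtain ⟨p, hp⟩ := hconn.exists_walk_length_eq_dist u m
  obtain ⟨q, hq⟩ := hconn.exists_walk_length_eq_dist m w
  obtain ⟨p', hp'⟩ := hconn.exists_walk_length_eq_dist u m'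
  obtain ⟨q', hq'⟩ := hconn.exists_walk_length_eq_dist m' w
  have hl : (p.append q).length = G.dist u w := by
    rw [SimpleGraph.Walk.length_append, hp, hq, h3]
  have hl' : (p'.append q').length = G.dist u w := by
    rw [SimpleGraph.Walk.length_append, hp', hq', h4]
  have hP := (p.append q).isPath_of_length_eq_dist hl
  have hP' := (p'.append q').isPath_of_length_eq_dist hl'
  have hpq : (⟨p.append q, hP⟩ : G.Path u w) = ⟨p'.append q', hP'⟩ :=
    hacyc.path_unique _ _
  have heq : p.append q = p'.append q' := congrArg Subtype.val hpq
  have hm : (p.append q).getVert a = m := by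
    rw [SimpleGraph.Walk.getVert_append, if_neg (by rw [hp, h1]; exact lt_irrefl a),
      hp, h1, Nat.sub_self, SimpleGraph.Walk.getVert_zero]
  have hm' : (p'.append q').getVert a = m' := by
    rw [SimpleGraph.Walk.getVert_append, if_neg (by rw [hp', h2]; exact lt_irrefl a),
      hp', h2, Nat.sub_self, SimpleGraph.Walk.getVert_zero]
  rw [← hm, ← hm', heq]

/-- In a tree, the distance from a neighbour differs by exactly 1. -/
lemma aux_adj_dist (hconn : G.Connected) (hacyc : G.IsAcyclic) {x y z : V} (h : G.Adj x y) :
    G.dist y z = G.dist x z + 1 ∨ G.dist y z + 1 = G.dist x z := by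
  classical
  by_cases hcase : G.dist y z = G.dist x z + 1
  · exact Or.inl hcase
  right
  have htri : G.dist y z ≤ G.dist x z + 1 := by
    have := hconn.dist_triangle (u := y) (v := x) (w := z)
    have hyx : G.dist y x = 1 := SimpleGraph.dist_eq_one_iff_adj.mpr h.symm
    omega
  obtain ⟨q, hq⟩ := hconn.exists_walk_length_eq_dist y z
  have hqpath := q.isPath_of_length_eq_dist hq
  by_cases hx : x ∈ q.support
  · exfalso
    have hsplit := congrArg SimpleGraph.Walk.length (q.take_spec hx)
    rw [SimpleGraph.Walk.length_append] at hsplit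
    have h1 : G.dist y x ≤ (q.takeUntil x hx).length := SimpleGraph.dist_le _
    have h2 : G.dist x z ≤ (q.dropUntil x hx).length := SimpleGraph.dist_le _
    have hyx : G.dist y x = 1 := SimpleGraph.dist_eq_one_iff_adj.mpr h.symm
    omega
  · have hpath : (q.cons h).IsPath := hqpath.cons hx
    obtain ⟨p, hp⟩ := hconn.exists_walk_length_eq_dist x z
    have hppath := p.isPath_of_length_eq_dist hp
    have := hacyc.path_unique (⟨q.cons h, hpath⟩ : G.Path x z) ⟨p, hppath⟩
    have hlen : (q.cons h).length = p.length :=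
      congrArg (fun w : G.Walk x z => w.length) (congrArg Subtype.val this)
    rw [SimpleGraph.Walk.length_cons, hq, hp] at hlen
    omega

end Aux

/-- If every element of `H` fixes a tail of the geodesic ray `c` pointwise and `H` acts
transitively on every horosphere centered at the end of `c`, then the stabilizers of the
vertices `c k` form an increasing chain, each of index `deg(c (k+1)) - 1` in the next. -/
theorem stmt_6 {V : Type*} (G : SimpleGraph V) (hconn : G.Connected) (hacyc : G.IsAcyclic)
    (hlf : ∀ v : V, (G.neighborSet v).Finite)
    (c : ℕ → V) (hc : ∀ i j : ℕ, G.dist (c i) (c j) = ((i : ℤ) - (j : ℤ)).natAbs)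
    (H : Subgroup (G ≃g G))
    (htail : ∀ h : G ≃g G, h ∈ H → ∃ N : ℕ, ∀ n ≥ N, h (c n) = c n)
    (htrans : ∀ k : ℕ, ∀ v ∈ {v : V | ∃ N : ℕ, ∀ n ≥ N, G.dist v (c n) + k = n},
      ∀ w ∈ {v : V | ∃ N : ℕ, ∀ n ≥ N, G.dist v (c n) + k = n},
      ∃ h ∈ H, h v = w) :
    ∀ k : ℕ,
      vertexStabilizer H (c k) ≤ vertexStabilizer H (c (k + 1)) ∧
      (vertexStabilizer H (c k)).relIndex (vertexStabilizer H (c (k + 1))) =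
        (G.neighborSet (c (k + 1))).ncard - 1 := by
  intro k
  -- distances along the ray
  have hd : ∀ i j : ℕ, i ≤ j → G.dist (c i) (c j) = j - i := by
    intro i j hij
    rw [hc]
    omega
  -- membership criterion for the stabilizers
  have memstab : ∀ (v : V) (h : G ≃g G),
      h ∈ vertexStabilizer H v ↔ h ∈ H ∧ h v = v := fun _ _ => Iff.rfl
  -- the key rigidity: if h ∈ H maps c k to a vertex at distance 1 from c (k+1)
  -- which is at distance n - k from c n, and h fixes c n (n ≥ k+2), then h fixes c (k+1)
  have fixnext : ∀ h : G ≃g G, h ∈ H → ∀ n : ℕ, n ≥ k + 2 → h (c n) = c n →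
      G.dist (h (c k)) (c (k + 1)) = 1 → G.dist (h (c k)) (c n) = n - k →
      h (c (k + 1)) = c (k + 1) := by
    intro h _ n hn hfix hd1 hdn
    have e1 : G.dist (h (c k)) (h (c (k + 1))) = G.dist (c k) (c (k + 1)) :=
      aux_iso_dist hconn h _ _
    have e2 : G.dist (h (c (k + 1))) (c n) = G.dist (c (k + 1)) (c n) := by
      calc G.dist (h (c (k + 1))) (c n) = G.dist (h (c (k + 1))) (h (c n)) := by rw [hfix]
        _ = _ := aux_iso_dist hconn h _ _
    have d1 := hd k (k + 1) (by omega)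
    have d2 := hd (k + 1) n (by omega)
    refine aux_mid_unique hconn hacyc (u := h (c k)) (w := c n) (a := 1)
      ?_ hd1 ?_ ?_ <;> omega
  -- Part 1: the stabilizer of c k is contained in that of c (k+1)
  have part1 : vertexStabilizer H (c k) ≤ vertexStabilizer H (c (k + 1)) := by
    intro h hh
    obtain ⟨hH, hfix⟩ := hh
    obtain ⟨N, hN⟩ := htail h hH
    set n := max N (k + 2) with hn
    refine ⟨hH, fixnext h hH n (le_max_right _ _) (hN n (le_max_left _ _)) ?_ ?_⟩
    · rw [hfix]
      have := hd k (k + 1) (by omega)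
      omega
    · rw [hfix]
      exact hd k n (by omega)
  refine ⟨part1, ?_⟩
  -- neighbours of c (k+1) other than c (k+2) lie on the horosphere S_k
  have nbrdist : ∀ v : V, G.Adj (c (k + 1)) v → v ≠ c (k + 2) →
      ∀ n : ℕ, n ≥ k + 2 → G.dist v (c n) = n - k := by
    intro v hadj hne n hn
    rcases aux_adj_dist hconn hacyc (x := c (k + 1)) (y := v) (z := c n) hadj with h1 | h1
    · rw [h1, hd (k+1) n (by omega)]
      omega
    · exfalso
      apply hne
      have hdv : G.dist v (c n) = n - k - 2 := by
        rw [hd (k+1) n (by omega)] at h1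
        omega
      have hvd : G.dist (c (k + 1)) v = 1 := SimpleGraph.dist_eq_one_iff_adj.mpr hadj
      have d12 := hd (k + 1) (k + 2) (by omega)
      have d1n := hd (k + 1) n (by omega)
      have d2n := hd (k + 2) n (by omega)
      refine aux_mid_unique hconn hacyc (u := c (k + 1)) (w := c n) (a := 1)
        hvd ?_ ?_ ?_ <;> omega
  -- c (k+2) is a neighbour of c (k+1)
  have hadj2 : c (k + 2) ∈ G.neighborSet (c (k + 1)) := by
    have : G.dist (c (k + 1)) (c (k + 2)) = 1 := by
      have := hd (k + 1) (k + 2) (by omega); omega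
    exact SimpleGraph.dist_eq_one_iff_adj.mp this
  set K := vertexStabilizer H (c (k + 1)) with hK
  set J := vertexStabilizer H (c k) with hJ
  set S : Set V := G.neighborSet (c (k + 1)) \ {c (k + 2)} with hS
  -- every element of K maps c k into S
  have himg : ∀ h : G ≃g G, h ∈ K → h (c k) ∈ S := by
    intro h hh
    obtain ⟨hH, hfix⟩ := hh
    obtain ⟨N, hN⟩ := htail h hH
    set n := max N (k + 2) with hn
    constructor
    · show G.Adj (c (k + 1)) (h (c k))
      have : G.Adj (h (c (k + 1))) (h (c k)) := h.map_adj_iff.mpr (by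
        have : G.dist (c (k + 1)) (c k) = 1 := by
          rw [SimpleGraph.dist_comm]; have := hd k (k + 1) (by omega); omega
        exact SimpleGraph.dist_eq_one_iff_adj.mp this)
      rwa [hfix] at this
    · intro hmem
      have hveq : h (c k) = c (k + 2) := hmem
      have h1 : G.dist (h (c k)) (c n) = n - k := by
        rw [← hN n (le_max_left _ _), aux_iso_dist hconn]
        exact hd k n (by omega)
      rw [hveq, hd (k + 2) n (by omega)] at h1
      omega
  -- every element of S is the image of c k under some element of K
  have hsurj : ∀ v ∈ S, ∃ h : G ≃g G, h ∈ K ∧ h (c k) = v := by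
    intro v hv
    obtain ⟨hvadj, hvne⟩ := hv
    have hvadj : G.Adj (c (k + 1)) v := hvadj
    have hvne : v ≠ c (k + 2) := hvne
    have hck : c k ∈ {v : V | ∃ N : ℕ, ∀ n ≥ N, G.dist v (c n) + k = n} := by
      refine ⟨k, fun n hn => ?_⟩
      rw [hd k n hn]; omega
    have hvS : v ∈ {v : V | ∃ N : ℕ, ∀ n ≥ N, G.dist v (c n) + k = n} := by
      refine ⟨k + 2, fun n hn => ?_⟩
      rw [nbrdist v hvadj hvne n hn]; omega
    obtain ⟨h, hH, hhv⟩ := htrans k (c k) hck v hvS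
    obtain ⟨N, hN⟩ := htail h hH
    set n := max N (k + 2) with hn
    have hfix : h (c (k + 1)) = c (k + 1) := by
      refine fixnext h hH n (le_max_right _ _) (hN n (le_max_left _ _)) ?_ ?_
      · rw [hhv, SimpleGraph.dist_comm]
        exact SimpleGraph.dist_eq_one_iff_adj.mpr hvadj
      · rw [hhv]
        exact nbrdist v hvadj hvne n (le_max_right _ _)
    exact ⟨h, ⟨hH, hfix⟩, hhv⟩
  -- build the bijection between cosets and S
  have hfS : ∀ h : K, ((h : G ≃g G) (c k)) ∈ S := fun h => himg h h.2
  let f : K → S := fun h => ⟨(h : G ≃g G) (c k), hfS h⟩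
  have hresp : ∀ a b : K, (QuotientGroup.leftRel (J.subgroupOf K)) a b → f a = f b := by
    intro a b hab
    rw [QuotientGroup.leftRel_apply] at hab
    rw [Subgroup.mem_subgroupOf] at hab
    obtain ⟨-, hfix⟩ := hab
    have : ((a : G ≃g G))⁻¹ ((b : G ≃g G) (c k)) = c k := hfix
    apply Subtype.ext
    show (a : G ≃g G) (c k) = (b : G ≃g G) (c k)
    calc (a : G ≃g G) (c k) = (a : G ≃g G) (((a : G ≃g G))⁻¹ ((b : G ≃g G) (c k))) := by
          rw [this]
      _ = (b : G ≃g G) (c k) := (a : G ≃g G).apply_symm_apply _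
  let fbar : (K ⧸ J.subgroupOf K) → S := Quotient.lift f hresp
  have hbij : Function.Bijective fbar := by
    constructor
    · intro x y
      refine Quotient.inductionOn₂ x y ?_
      intro a b hab
      have hab' : (a : G ≃g G) (c k) = (b : G ≃g G) (c k) := congrArg Subtype.val hab
      apply Quotient.sound
      refine QuotientGroup.leftRel_apply.mpr (Subgroup.mem_subgroupOf.mpr ⟨?_, ?_⟩)
      · exact ((memstab _ _).mp (K.mul_mem (K.inv_mem a.2) b.2)).1
      · show ((a : G ≃g G))⁻¹ ((b : G ≃g G) (c k)) = c k
        rw [← hab']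
        exact (a : G ≃g G).symm_apply_apply _
    · rintro ⟨v, hv⟩
      obtain ⟨h, hK', hhv⟩ := hsurj v hv
      exact ⟨Quotient.mk _ (⟨h, hK'⟩ : K), Subtype.ext hhv⟩
  have hcard : J.relIndex K = S.ncard := by
    have : J.relIndex K = Nat.card (K ⧸ J.subgroupOf K) := rfl
    rw [this, Nat.card_congr (Equiv.ofBijective fbar hbij), Nat.card_coe_set_eq]
  rw [hcard, hS, Set.ncard_diff_singleton_of_mem hadj2]
end

section
/- Let X be a tree with vertex set V and let g be an automorphism of X. Suppose L, L′ : ℤ → V are geodesic lines and ℓ, ℓ′ are nonzero integers with g(L(n)) = L(n + ℓ) and g(L′(n)) = L′(n + ℓ′) for all n ∈ ℤ. Then L and L′ have the same image in V, and |ℓ| = |ℓ′|. -/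
open SimpleGraph

def lineWalk {V : Type*} {G : SimpleGraph V} (L : ℤ → V)
    (hadj : ∀ n : ℤ, G.Adj (L n) (L (n+1))) :
    (a : ℤ) → (k : ℕ) → G.Walk (L a) (L (a + k))
  | a, 0 => Walk.nil.copy rfl (congrArg L (by simp))
  | a, k+1 => (Walk.cons (hadj a) (lineWalk L hadj (a+1) k)).copy rfl
      (congrArg L (by push_cast; ring))

lemma lineWalk_length {V : Type*} {G : SimpleGraph V} (L : ℤ → V)
    (hadj : ∀ n : ℤ, G.Adj (L n) (L (n+1))) (a : ℤ) (k : ℕ) :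
    (lineWalk L hadj a k).length = k := by
  induction k generalizing a with
  | zero => simp [lineWalk]
  | succ k ih => simp [lineWalk, ih]

lemma mem_lineWalk_support {V : Type*} {G : SimpleGraph V} (L : ℤ → V)
    (hadj : ∀ n : ℤ, G.Adj (L n) (L (n+1))) (a : ℤ) (k j : ℕ) (hj : j ≤ k) :
    L (a + j) ∈ (lineWalk L hadj a k).support := by
  induction k generalizing a j with
  | zero =>
    have : j = 0 := by omega
    subst this
    simp [lineWalk]
  | succ k ih =>
    rw [lineWalk]
    rw [Walk.support_copy, Walk.support_cons]
    rcases j with _ | j'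
    · simp
    · right
      have h1 : L (a + (j'+1 : ℕ)) = L ((a+1) + (j' : ℕ)) := congrArg L (by push_cast; ring)
      rw [h1]
      exact ih (a+1) j' (by omega)

lemma lineWalk_support_subset {V : Type*} {G : SimpleGraph V} (L : ℤ → V)
    (hadj : ∀ n : ℤ, G.Adj (L n) (L (n+1))) (a : ℤ) (k : ℕ) :
    ∀ v ∈ (lineWalk L hadj a k).support, v ∈ Set.range L := by
  induction k generalizing a with
  | zero =>
    intro v hv
    simp [lineWalk] at hv
    exact ⟨a, hv.symm⟩
  | succ k ih =>
    intro v hv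
    rw [lineWalk, Walk.support_copy, Walk.support_cons] at hv
    rcases List.mem_cons.mp hv with rfl | hv
    · exact ⟨a, rfl⟩
    · exact ih (a+1) v hv

lemma dist_le_of_mem_support {V : Type*} {G : SimpleGraph V} {u v w : V}
    (p : G.Walk u v) (h : w ∈ p.support) : G.dist u w ≤ p.length := by
  classical
  exact (SimpleGraph.dist_le (p.takeUntil w h)).trans (SimpleGraph.Walk.length_takeUntil_le p h)

lemma iso_dist {V : Type*} {G : SimpleGraph V} (hconn : G.Connected) (g : G ≃g G) (u v : V) :
    G.dist (g u) (g v) = G.dist u v := by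
  have key : ∀ (e : G ≃g G) (x y : V), G.dist (e x) (e y) ≤ G.dist x y := by
    intro e x y
    obtain ⟨p, hp⟩ := hconn.exists_walk_length_eq_dist x y
    calc G.dist (e x) (e y) ≤ (p.map e.toHom).length := SimpleGraph.dist_le _
    _ = G.dist x y := by rw [SimpleGraph.Walk.length_map, hp]
  refine le_antisymm (key g u v) ?_
  have := key g.symm (g u) (g v)
  simpa using this

lemma iter_dist {V : Type*} {G : SimpleGraph V} (hconn : G.Connected) (g : G ≃g G) :
    ∀ (k : ℕ) (u v : V), G.dist ((⇑g)^[k] u) ((⇑g)^[k] v) = G.dist u v := by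
  intro k
  induction k with
  | zero => intro u v; simp
  | succ k ih =>
    intro u v
    rw [Function.iterate_succ_apply, Function.iterate_succ_apply, ih, iso_dist hconn]

lemma iter_translate {V : Type*} {G : SimpleGraph V} (g : G ≃g G) (L : ℤ → V) (a : ℕ)
    (hgL : ∀ n : ℤ, g (L n) = L (n + (a:ℤ))) :
    ∀ (k : ℕ) (n : ℤ), (⇑g)^[k] (L n) = L (n + ((k*a : ℕ) : ℤ)) := by
  intro k
  induction k with
  | zero => intro n; simp
  | succ k ih =>
    intro n
    rw [Function.iterate_succ_apply, hgL, ih]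
    congr 1
    push_cast
    ring

lemma axis_main {V : Type*} {G : SimpleGraph V} (hconn : G.Connected) (hacyc : G.IsAcyclic)
    (g : G ≃g G) (L L' : ℤ → V)
    (hL : ∀ i j : ℤ, G.dist (L i) (L j) = (i - j).natAbs)
    (hL' : ∀ i j : ℤ, G.dist (L' i) (L' j) = (i - j).natAbs)
    (a b : ℕ) (ha : 0 < a) (hb : 0 < b)
    (hgL : ∀ n : ℤ, g (L n) = L (n + (a:ℤ)))
    (hgL' : ∀ n : ℤ, g (L' n) = L' (n + (b:ℤ))) :
    Set.range L ⊆ Set.range L' ∧ a ≤ b := by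
  classical
  set d := G.dist (L 0) (L' 0) with hd
  have hadjL : ∀ n : ℤ, G.Adj (L n) (L (n+1)) := by
    intro n
    have h1 : G.dist (L (n+1)) (L n) = 1 := by rw [hL]; omega
    exact (SimpleGraph.dist_eq_one_iff_adj.mp h1).symm
  have hadjL' : ∀ n : ℤ, G.Adj (L' n) (L' (n+1)) := by
    intro n
    have h1 : G.dist (L' (n+1)) (L' n) = 1 := by rw [hL']; omega
    exact (SimpleGraph.dist_eq_one_iff_adj.mp h1).symm
  have hiterL := iter_translate g L a hgL
  have hiterL' := iter_translate g L' b hgL'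
  have hdi := iter_dist hconn g
  constructor
  · -- range inclusion
    rintro x ⟨i, rfl⟩
    set k : ℕ := d + i.natAbs + 1 with hk
    obtain ⟨N, hN⟩ : ∃ N, N = k * a := ⟨_, rfl⟩
    obtain ⟨M, hM⟩ : ∃ M, M = k * b := ⟨_, rfl⟩
    have hiN : ∀ n : ℤ, (⇑g)^[k] (L n) = L (n + (N:ℤ)) := by
      intro n; rw [hiterL k n, hN]
    have hiM : ∀ n : ℤ, (⇑g)^[k] (L' n) = L' (n + (M:ℤ)) := by
      intro n; rw [hiterL' k n, hM]
    have hNk : d + i.natAbs < N := by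
      rw [hN]
      exact lt_of_lt_of_le (by omega) (Nat.le_mul_of_pos_right k ha)
    clear hN hM hk
    -- distances between corresponding endpoints
    have hd1 : G.dist (L (-(N:ℤ))) (L' (-(M:ℤ))) = d := by
      have h := hdi k (L (-(N:ℤ))) (L' (-(M:ℤ)))
      rw [hiN, hiM, show (-(N:ℤ) + N) = 0 by ring, show (-(M:ℤ) + M) = 0 by ring] at h
      rw [← h, hd]
    have hd2 : G.dist (L' (M:ℤ)) (L ((N:ℤ))) = d := by
      have h := hdi k (L' 0) (L 0)
      rw [hiN, hiM, zero_add, zero_add] at h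
      rw [h, hd, SimpleGraph.dist_comm]
    obtain ⟨W1, hW1⟩ := hconn.exists_walk_length_eq_dist (L (-(N:ℤ))) (L' (-(M:ℤ)))
    obtain ⟨W3, hW3⟩ := hconn.exists_walk_length_eq_dist (L' (M:ℤ)) (L ((N:ℤ)))
    set Q : G.Walk (L' (-(M:ℤ))) (L' (M:ℤ)) :=
      (lineWalk L' hadjL' (-(M:ℤ)) (2*M)).copy rfl (congrArg L' (by push_cast; ring)) with hQdef
    set P : G.Walk (L (-(N:ℤ))) (L ((N:ℤ))) :=
      (lineWalk L hadjL (-(N:ℤ)) (2*N)).copy rfl (congrArg L (by push_cast; ring)) with hPdef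
    have hPlen : P.length = 2*N := by
      rw [hPdef, SimpleGraph.Walk.length_copy, lineWalk_length]
    have hP : P.IsPath := by
      apply P.isPath_of_length_eq_dist
      rw [hPlen, hL]
      omega
    set W : G.Walk (L (-(N:ℤ))) (L ((N:ℤ))) := W1.append (Q.append W3) with hWdef
    have hPW : P.support ⊆ W.support := by
      have huniq := hacyc.path_unique ⟨P, hP⟩ ⟨W.bypass, W.bypass_isPath⟩
      have hPe : P = W.bypass := congrArg Subtype.val huniq
      rw [hPe]
      exact W.support_bypass_subset
    have hiP : L i ∈ P.support := by
      have h1 : L i = L (-(N:ℤ) + ((i + N).natAbs : ℕ)) := congrArg L (by omega)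
      rw [h1, hPdef, SimpleGraph.Walk.support_copy]
      exact mem_lineWalk_support L hadjL _ _ _ (by omega)
    have hiW := hPW hiP
    rw [hWdef, SimpleGraph.Walk.mem_support_append_iff] at hiW
    rcases hiW with h1 | h23
    · exfalso
      have hle : G.dist (L (-(N:ℤ))) (L i) ≤ W1.length := dist_le_of_mem_support _ h1
      rw [hW1, hd1, hL] at hle
      omega
    · rw [SimpleGraph.Walk.mem_support_append_iff] at h23
      rcases h23 with h2 | h3
      · rw [hQdef, SimpleGraph.Walk.support_copy] at h2
        exact lineWalk_support_subset L' hadjL' _ _ _ h2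
      · exfalso
        have h3r : L i ∈ W3.reverse.support := by
          rw [SimpleGraph.Walk.support_reverse]
          exact List.mem_reverse.mpr h3
        have hle : G.dist (L ((N:ℤ))) (L i) ≤ W3.reverse.length := dist_le_of_mem_support _ h3r
        rw [SimpleGraph.Walk.length_reverse, hW3, hd2, hL] at hle
        omega
  · -- a ≤ b
    have key : ∀ k : ℕ, k * a ≤ d + k * b + d := by
      intro k
      have h1 : G.dist (L 0) ((⇑g)^[k] (L 0)) = k * a := by
        rw [hiterL k 0, hL]
        omega
      have h2 : G.dist (L' 0) ((⇑g)^[k] (L' 0)) = k * b := by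
        rw [hiterL' k 0, hL']
        omega
      have h3 : G.dist ((⇑g)^[k] (L' 0)) ((⇑g)^[k] (L 0)) = d := by
        rw [hdi k, hd, SimpleGraph.dist_comm]
      calc k * a = G.dist (L 0) ((⇑g)^[k] (L 0)) := h1.symm
      _ ≤ G.dist (L 0) (L' 0) + G.dist (L' 0) ((⇑g)^[k] (L 0)) := hconn.dist_triangle
      _ ≤ G.dist (L 0) (L' 0) + (G.dist (L' 0) ((⇑g)^[k] (L' 0)) +
          G.dist ((⇑g)^[k] (L' 0)) ((⇑g)^[k] (L 0))) := by
        exact Nat.add_le_add_left hconn.dist_triangle _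
      _ = d + (k * b + d) := by rw [← hd, h2, h3]
      _ = d + k * b + d := by ring
    by_contra hlt
    push_neg at hlt
    set k : ℕ := 2*d+1 with hk
    have h1 := key k
    have h2 : k*b + k ≤ k*a := by
      calc k*b + k = k*(b+1) := by ring
      _ ≤ k*a := Nat.mul_le_mul le_rfl hlt
    omega

lemma axis_normalize {V : Type*} {G : SimpleGraph V} (g : G ≃g G) (L : ℤ → V) (ℓ : ℤ)
    (hℓ : ℓ ≠ 0)
    (hL : ∀ i j : ℤ, G.dist (L i) (L j) = (i - j).natAbs)
    (hgL : ∀ n : ℤ, g (L n) = L (n + ℓ)) :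
    ∃ M : ℤ → V, Set.range M = Set.range L ∧
      (∀ i j : ℤ, G.dist (M i) (M j) = (i - j).natAbs) ∧
      (∀ n : ℤ, g (M n) = M (n + (ℓ.natAbs : ℤ))) := by
  rcases lt_or_gt_of_ne hℓ with h | h
  · refine ⟨fun n => L (-n), ?_, ?_, ?_⟩
    · ext x
      constructor
      · rintro ⟨n, rfl⟩; exact ⟨-n, rfl⟩
      · rintro ⟨n, rfl⟩; exact ⟨-n, by simp⟩
    · intro i j
      rw [hL]
      omega
    · intro n
      rw [hgL]
      exact congrArg L (by omega)
  · refine ⟨L, rfl, hL, ?_⟩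
    intro n
    rw [hgL]
    exact congrArg L (by omega)

/-- Uniqueness of the axis of a hyperbolic tree automorphism: two geodesic lines invariant
under `g`, on which `g` translates by nonzero amounts, have the same image, and the
translation amplitudes agree up to sign. -/
theorem stmt_8 {V : Type*} (G : SimpleGraph V) (hconn : G.Connected) (hacyc : G.IsAcyclic)
    (g : G ≃g G) (L L' : ℤ → V)
    (hL : ∀ i j : ℤ, G.dist (L i) (L j) = (i - j).natAbs)
    (hL' : ∀ i j : ℤ, G.dist (L' i) (L' j) = (i - j).natAbs)
    (ℓ ℓ' : ℤ) (hℓ : ℓ ≠ 0) (hℓ' : ℓ' ≠ 0)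
    (hgL : ∀ n : ℤ, g (L n) = L (n + ℓ))
    (hgL' : ∀ n : ℤ, g (L' n) = L' (n + ℓ')) :
    Set.range L = Set.range L' ∧ ℓ.natAbs = ℓ'.natAbs := by
  obtain ⟨M, hMr, hMd, hMg⟩ := axis_normalize g L ℓ hℓ hL hgL
  obtain ⟨M', hMr', hMd', hMg'⟩ := axis_normalize g L' ℓ' hℓ' hL' hgL'
  have ha : 0 < ℓ.natAbs := Int.natAbs_pos.mpr hℓ
  have hb : 0 < ℓ'.natAbs := Int.natAbs_pos.mpr hℓ'
  obtain ⟨hr1, hab⟩ := axis_main hconn hacyc g M M' hMd hMd' ℓ.natAbs ℓ'.natAbs ha hb hMg hMg'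
  obtain ⟨hr2, hba⟩ := axis_main hconn hacyc g M' M hMd' hMd ℓ'.natAbs ℓ.natAbs hb ha hMg' hMg
  constructor
  · rw [← hMr, ← hMr']
    exact le_antisymm hr1 hr2
  · omega
end
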